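/- Let 0 ≤ l < k ≤ n. For every λ ∈ Γ_k one has Σ_{j=1}^{n} G^{jj}(λ) ≤ (n−k+1) · σ_{k−1}(λ)/σ_l(λ). -/
import Mathlib


/-- The `m`-th elementary symmetric polynomial of `lam : Fin n → ℝ`. -/
noncomputable def esymm (n m : ℕ) (lam : Fin n → ℝ) : ℝ :=
  ∑ s ∈ Finset.univ.powersetCard m, ∏ i ∈ s, lam i

/-- `σ_{l-1}` with the convention `σ_{-1} = 0`. -/
noncomputable def esymmPred (n l : ℕ) (lam : Fin n → ℝ) : ℝ :=
  if l = 0 then 0 else esymm n (l - 1) lam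

/-- The Gårding cone `Γ_k`. -/
def GammaK (n k : ℕ) : Set (Fin n → ℝ) :=
  {lam | ∀ j, 1 ≤ j → j ≤ k → 0 < esymm n j lam}

/-- `G^{jj} = ∂(σ_k/σ_l)/∂λ_j`. -/
noncomputable def Gjj (n k l : ℕ) (lam : Fin n → ℝ) (j : Fin n) : ℝ :=
  (esymm n (k - 1) (Function.update lam j 0) * esymm n l lam
      - esymm n k lam * esymmPred n l (Function.update lam j 0)) / (esymm n l lam) ^ 2

/-- `F^{ii} = θ Σ_j G^{jj} − μ G^{ii}`. -/
noncomputable def Fii (n k l : ℕ) (θ μ : ℝ) (lam : Fin n → ℝ) (i : Fin n) : ℝ :=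
  θ * ∑ j, Gjj n k l lam j - μ * Gjj n k l lam i

/-- Gradient vector of `u` at `x`. -/
noncomputable def pgrad (n : ℕ) (u : (Fin n → ℝ) → ℝ) (x : Fin n → ℝ) : Fin n → ℝ :=
  fun i => fderiv ℝ u x (Pi.single i 1)

/-- Hessian matrix of `u` at `x`. -/
noncomputable def hessMat (n : ℕ) (u : (Fin n → ℝ) → ℝ) (x : Fin n → ℝ) :
    Matrix (Fin n) (Fin n) ℝ :=
  Matrix.of fun i j => iteratedFDeriv ℝ 2 u x ![Pi.single i 1, Pi.single j 1]

/-- Hessian matrix of `u` at `x` computed with derivatives within `s`. -/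
noncomputable def hessMatWithin (n : ℕ) (u : (Fin n → ℝ) → ℝ) (s : Set (Fin n → ℝ))
    (x : Fin n → ℝ) : Matrix (Fin n) (Fin n) ℝ :=
  Matrix.of fun i j => iteratedFDerivWithin ℝ 2 u s x ![Pi.single i 1, Pi.single j 1]

/-- `η[u] = (Δu) I − D²u`. -/
noncomputable def etaMat (n : ℕ) (u : (Fin n → ℝ) → ℝ) (x : Fin n → ℝ) :
    Matrix (Fin n) (Fin n) ℝ :=
  Matrix.trace (hessMat n u x) • (1 : Matrix (Fin n) (Fin n) ℝ) - hessMat n u x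

/-- Euclidean ball in `Fin n → ℝ`. -/
def EBall (n : ℕ) (c : Fin n → ℝ) (r : ℝ) : Set (Fin n → ℝ) :=
  {x | ∑ i, (x i - c i) ^ 2 < r ^ 2}

/-- `W = √(1+|Du|²)`. -/
noncomputable def Wgraph (n : ℕ) (u : (Fin n → ℝ) → ℝ) (x : Fin n → ℝ) : ℝ :=
  Real.sqrt (1 + ∑ i, (pgrad n u x i) ^ 2)

/-- Matrix similar to `A = W⁻¹ g^{-1/2} D²u g^{-1/2}`, namely `W⁻¹ g⁻¹ D²u`. -/
noncomputable def shapeMat (n : ℕ) (u : (Fin n → ℝ) → ℝ) (x : Fin n → ℝ) :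
    Matrix (Fin n) (Fin n) ℝ :=
  (Wgraph n u x)⁻¹ •
    ((1 + Matrix.vecMulVec (pgrad n u x) (pgrad n u x))⁻¹ * hessMat n u x)

lemma esymm_zero' (n : ℕ) (lam : Fin n → ℝ) : esymm n 0 lam = 1 := by
  simp [esymm]

lemma esymm_update_eq (n m : ℕ) (lam : Fin n → ℝ) (j : Fin n) :
    esymm n m (Function.update lam j 0)
      = ∑ s ∈ Finset.univ.powersetCard m, if j ∈ s then 0 else ∏ i ∈ s, lam i := by
  unfold esymm
  refine Finset.sum_congr rfl fun s _ => ?_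
  by_cases h : j ∈ s
  · simp only [h, if_true]
    exact Finset.prod_eq_zero h (by simp)
  · simp only [h, if_false]
    exact Finset.prod_congr rfl fun i hi =>
      Function.update_of_ne (ne_of_mem_of_not_mem hi h) _ _

lemma sum_esymm_update (n m : ℕ) (lam : Fin n → ℝ) :
    ∑ j, esymm n m (Function.update lam j 0) = ((n - m : ℕ) : ℝ) * esymm n m lam := by
  simp only [esymm_update_eq]
  rw [Finset.sum_comm]
  unfold esymm
  rw [Finset.mul_sum]
  refine Finset.sum_congr rfl fun s hs => ?_
  have hcard : s.card = m := (Finset.mem_powersetCard.mp hs).2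
  rw [Finset.sum_ite, Finset.sum_const, Finset.sum_const, Finset.filter_not,
    Finset.filter_mem_eq_inter, Finset.univ_inter]
  simp [Finset.card_sdiff_of_subset (Finset.subset_univ s), hcard]

theorem stmt6 (n k l : ℕ) (hlk : l < k) (hkn : k ≤ n)
    (lam : Fin n → ℝ) (hlam : lam ∈ GammaK n k) :
    ∑ j, Gjj n k l lam j
      ≤ ((n : ℝ) - (k : ℝ) + 1) * (esymm n (k - 1) lam / esymm n l lam) := by
  have hk1 : 1 ≤ k := by omega
  have hb : 0 < esymm n l lam := by
    rcases Nat.eq_zero_or_pos l with h | h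
    · simp [h, esymm_zero']
    · exact hlam l h (le_of_lt hlk)
  have hc : 0 < esymm n k lam := hlam k (by omega) le_rfl
  -- sum of the predecessor terms is nonnegative
  have hS : 0 ≤ ∑ j, esymmPred n l (Function.update lam j 0) := by
    rcases Nat.eq_zero_or_pos l with h | h
    · simp [h, esymmPred]
    · have : ∑ j, esymmPred n l (Function.update lam j 0)
          = ((n - (l - 1) : ℕ) : ℝ) * esymm n (l - 1) lam := by
        simp only [esymmPred, Nat.pos_iff_ne_zero.mp h, if_false]
        exact sum_esymm_update n (l - 1) lam
      rw [this]
      have hd : 0 ≤ esymm n (l - 1) lam := by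
        rcases Nat.eq_zero_or_pos (l - 1) with h1 | h1
        · simp [h1, esymm_zero']
        · exact le_of_lt (hlam (l - 1) h1 (by omega))
      positivity
  have hA : ∑ j, esymm n (k - 1) (Function.update lam j 0)
      = ((n : ℝ) - (k : ℝ) + 1) * esymm n (k - 1) lam := by
    rw [sum_esymm_update]
    congr 1
    have : (n - (k - 1) : ℕ) = n - k + 1 := by omega
    rw [this]
    push_cast [Nat.sub_add_cancel, Nat.cast_sub hkn]
    ring
  unfold Gjj
  rw [← Finset.sum_div, div_le_iff₀ (by positivity)]
  have hexp : ∑ j, (esymm n (k - 1) (Function.update lam j 0) * esymm n l lam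
      - esymm n k lam * esymmPred n l (Function.update lam j 0))
      = ((n : ℝ) - (k : ℝ) + 1) * esymm n (k - 1) lam * esymm n l lam
        - esymm n k lam * ∑ j, esymmPred n l (Function.update lam j 0) := by
    rw [Finset.sum_sub_distrib, ← Finset.sum_mul, hA, ← Finset.mul_sum]
  rw [hexp]
  have key : ((n : ℝ) - (k : ℝ) + 1) * (esymm n (k - 1) lam / esymm n l lam)
      * esymm n l lam ^ 2
      = ((n : ℝ) - (k : ℝ) + 1) * esymm n (k - 1) lam * esymm n l lam := by
    field_simp
  rw [key]
  nlinarith [mul_nonneg hc.le hS]
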